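/- arXiv:1701.07612 — 4 statements merged into one kernel-verified Lean document; each statement's English description precedes it below -/
import Mathlib

section
/- Let S¹ be the unit circle in ℂ. There exist two open subsets U₀, U₁ of S¹ × S¹ with U₀ ∪ U₁ = S¹ × S¹ such that the evaluation map e : P(S¹) → S¹ × S¹ admits a continuous section on U₀ and a continuous section on U₁. (Equivalently, the topological complexity of S¹ satisfies TC(S¹) ≤ 1.) -/
/-!
Write `y = x w` with `w = y / x` on the unit circle. Where `w` lies off the ray `(-∞, 0]`, its
principal argument depends continuously on `(x, y)`, so `t ↦ x e^{i t arg w}` is a path from `x` to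
`y` depending continuously on the endpoints. Off the opposite ray the same works after rotating the
slit by `π`, and the two regions cover `S¹ × S¹` because `w ≠ 0`.
-/

open unitInterval Complex

local notation "S¹" => Metric.sphere (0 : ℂ) 1

noncomputable section

def circleArc : C(S¹ × ℝ, C(I, S¹)) :=
  ContinuousMap.curry
    ⟨fun q => ⟨q.1.1.1 * exp ((q.2 * q.1.2 : ℝ) * Complex.I), by
      simp only [mem_sphere_zero_iff_norm, norm_mul, norm_exp_ofReal_mul_I, norm_eq_of_mem_sphere,
        mul_one]⟩,
      by fun_prop⟩

lemma circleArc_apply_zero (p : S¹ × ℝ) : circleArc p 0 = p.1 := by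
  ext; simp [circleArc]

lemma coe_circleArc_apply_one (p : S¹ × ℝ) :
    (circleArc p 1 : ℂ) = p.1 * exp (p.2 * Complex.I) := by
  simp [circleArc]

lemma exists_section_of_continuous_angle {X : Type*} [TopologicalSpace X] {f : X → S¹ × S¹}
    {θ : X → ℝ} (hf : Continuous f) (hθ : Continuous θ)
    (hfθ : ∀ x, ((f x).2 : ℂ) = (f x).1 * exp (θ x * Complex.I)) :
    ∃ s : C(X, C(I, S¹)), ∀ x, (s x 0, s x 1) = f x :=
  ⟨circleArc.comp ⟨fun x => ((f x).1, θ x), by fun_prop⟩, fun x =>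
    Prod.ext (circleArc_apply_zero _)
      (Subtype.ext ((coe_circleArc_apply_one _).trans (hfθ x).symm))⟩

def rotatedRatio (α : ℝ) (p : S¹ × S¹) : ℂ := p.2 / (exp (α * Complex.I) * p.1)

lemma continuous_rotatedRatio (α : ℝ) : Continuous (rotatedRatio α) :=
  Continuous.div (by fun_prop) (by fun_prop) fun p =>
    mul_ne_zero (exp_ne_zero _) (ne_zero_of_mem_unit_sphere p.1)

lemma norm_rotatedRatio (α : ℝ) (p : S¹ × S¹) : ‖rotatedRatio α p‖ = 1 := by
  simp [rotatedRatio, norm_exp_ofReal_mul_I, norm_eq_of_mem_sphere]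

lemma coe_snd_eq_mul_rotatedRatio (α : ℝ) (p : S¹ × S¹) :
    (p.2 : ℂ) = p.1 * exp (α * Complex.I) * rotatedRatio α p := by
  rw [rotatedRatio, mul_comm (p.1 : ℂ),
    mul_div_cancel₀ _ (mul_ne_zero (exp_ne_zero _) (ne_zero_of_mem_unit_sphere p.1))]

def slitDomain (α : ℝ) : Set (S¹ × S¹) := rotatedRatio α ⁻¹' slitPlane

lemma isOpen_slitDomain (α : ℝ) : IsOpen (slitDomain α) :=
  isOpen_slitPlane.preimage (continuous_rotatedRatio α)

lemma exists_section_on_slitDomain (α : ℝ) :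
    ∃ s : C(slitDomain α, C(I, S¹)), ∀ p, (s p 0, s p 1) = (p : S¹ × S¹) := by
  have hw_cont : Continuous fun p : slitDomain α => rotatedRatio α p :=
    (continuous_rotatedRatio α).comp continuous_subtype_val
  refine exists_section_of_continuous_angle (θ := fun p => α + arg (rotatedRatio α p))
    continuous_subtype_val
    (continuous_const.add (continuousOn_arg.comp_continuous hw_cont fun p => p.2)) fun p => ?_
  have harg : exp (arg (rotatedRatio α p) * Complex.I) = rotatedRatio α p := by
    simpa [norm_rotatedRatio] using norm_mul_exp_arg_mul_I (rotatedRatio α p)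
  push_cast
  rw [add_mul, exp_add, ← mul_assoc, harg, ← coe_snd_eq_mul_rotatedRatio]

lemma slitDomain_zero_union_slitDomain_pi : slitDomain 0 ∪ slitDomain Real.pi = Set.univ := by
  refine Set.eq_univ_of_forall fun p => ?_
  have hx : ((p.1 : S¹) : ℂ) ≠ 0 := ne_zero_of_mem_unit_sphere _
  have hy : ((p.2 : S¹) : ℂ) ≠ 0 := ne_zero_of_mem_unit_sphere _
  rcases mem_slitPlane_or_neg_mem_slitPlane (div_ne_zero hy hx) with h | h
  · left; simpa [slitDomain, rotatedRatio] using h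
  · right; simpa [slitDomain, rotatedRatio, exp_pi_mul_I, div_neg] using h

end

/-- There exist two open subsets `U₀, U₁` covering `S¹ × S¹`
(with `S¹` the unit circle in `ℂ`) such that the evaluation map
`e : C(I, S¹) → S¹ × S¹` admits a continuous section on each of them.
Equivalently, `TC(S¹) ≤ 1`. -/
theorem circle_TC_le_one :
    ∃ U₀ U₁ : Set (↥(Metric.sphere (0 : ℂ) 1) × ↥(Metric.sphere (0 : ℂ) 1)),
      IsOpen U₀ ∧ IsOpen U₁ ∧ U₀ ∪ U₁ = Set.univ ∧
      (∃ s : C(U₀, C(I, ↥(Metric.sphere (0 : ℂ) 1))),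
        ∀ a, ((s a) 0, (s a) 1) =
          (a : ↥(Metric.sphere (0 : ℂ) 1) × ↥(Metric.sphere (0 : ℂ) 1))) ∧
      (∃ s : C(U₁, C(I, ↥(Metric.sphere (0 : ℂ) 1))),
        ∀ a, ((s a) 0, (s a) 1) =
          (a : ↥(Metric.sphere (0 : ℂ) 1) × ↥(Metric.sphere (0 : ℂ) 1))) :=
  ⟨slitDomain 0, slitDomain Real.pi, isOpen_slitDomain 0, isOpen_slitDomain Real.pi,
    slitDomain_zero_union_slitDomain_pi, exists_section_on_slitDomain 0,
    exists_section_on_slitDomain Real.pi⟩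
end

section
/- For a topological space X, the evaluation map e : P(X) → X × X admits a continuous global section defined on all of X × X if and only if X is contractible. (Equivalently, TC(X) = 0 if and only if X is contractible, provided X is nonempty.) -/
/-!
A section `s` contracts `X` onto any point `c` via `H(t, x) = s(x, c)(t)`. Conversely, a
contraction `H` of `X` onto `c` gives paths `γ x` from `x` to `c` depending continuously on `x`,
and `s(x, y) = γ x ⬝ (γ y)⁻¹` is a continuous section.
-/

open unitInterval ContinuousMap

theorem ContinuousMap.Homotopy.continuous_uncurry_evalAt {X Y : Type*} [TopologicalSpace X]
    [TopologicalSpace Y] {f g : C(X, Y)} (H : f.Homotopy g) : Continuous ↿H.evalAt :=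
  H.continuous.comp continuous_swap

section MotionPlanning

variable {X : Type*} [TopologicalSpace X]

theorem exists_section_of_continuous_paths_to {c : X} (γ : ∀ x, Path x c)
    (hγ : Continuous ↿γ) : ∃ s : C(X × X, C(I, X)), ∀ p, (s p 0, s p 1) = p := by
  let δ : ∀ p : X × X, Path p.1 p.2 := fun p => (γ p.1).trans (γ p.2).symm
  have hδ : Continuous ↿δ :=
    Path.trans_continuous_family (fun p : X × X => γ p.1)
      (hγ.comp (continuous_fst.fst.prodMk continuous_snd)) (fun p : X × X => (γ p.2).symm)
      (Path.symm_continuous_family (fun p : X × X => γ p.2)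
        (hγ.comp (continuous_fst.snd.prodMk continuous_snd)))
  exact ⟨(ContinuousMap.mk ↿δ hδ).curry, fun p => Prod.ext (δ p).source (δ p).target⟩

theorem homotopic_id_const_of_section (s : C(X × X, C(I, X)))
    (hs : ∀ p, (s p 0, s p 1) = p) (c : X) : (ContinuousMap.id X).Homotopic (const X c) :=
  ⟨{ toContinuousMap := (s.comp ((ContinuousMap.id X).prodMk (const X c))).uncurry.comp prodSwap
     map_zero_left := fun x => congrArg Prod.fst (hs (x, c))
     map_one_left := fun x => congrArg Prod.snd (hs (x, c)) }⟩

end MotionPlanning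

/-- For a (nonempty) topological space `X`, the evaluation map
`e : C(I, X) → X × X` admits a continuous global section on all of `X × X`
if and only if `X` is contractible. (Equivalently, `TC(X) = 0` iff `X` is
contractible.) -/
theorem global_section_iff_contractible
    {X : Type*} [TopologicalSpace X] [Nonempty X] :
    (∃ s : C(X × X, C(I, X)), ∀ p, ((s p) 0, (s p) 1) = p) ↔
      ContractibleSpace X := by
  rw [contractible_iff_id_nullhomotopic]
  constructor
  · rintro ⟨s, hs⟩
    obtain ⟨c⟩ := ‹Nonempty X›
    exact ⟨c, homotopic_id_const_of_section s hs c⟩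
  · rintro ⟨c, ⟨H⟩⟩
    exact exists_section_of_continuous_paths_to H.evalAt H.continuous_uncurry_evalAt
end

section
/- Let X and Y be topological spaces and let f : X → Y be a homotopy equivalence. If U₀, …, U_k are open subsets covering Y × Y such that the evaluation map e_Y : P(Y) → Y × Y admits a continuous section on each U_i, then the open sets (f × f)⁻¹(U₀), …, (f × f)⁻¹(U_k) cover X × X, and the evaluation map e_X : P(X) → X × X admits a continuous section on each (f × f)⁻¹(U_i). In particular, TC(X) ≤ TC(Y), and spaces of the same homotopy type have equal topological complexity. -/
/-!
If `g` is a homotopy inverse of `f` on the left, a path from `f x` to `f x'` in `Y` is carried by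
`g` to a path from `g (f x)` to `g (f x')`, and the homotopy `g ∘ f ≃ id` supplies paths from `x`
to `g (f x)` and from `g (f x')` to `x'` that depend continuously on the endpoints.
Concatenating the three turns a motion planner for `Y` on `A` into one for `X` on `(f × f)⁻¹ A`.
-/

open unitInterval

section

variable {X Y : Type*} [TopologicalSpace X] [TopologicalSpace Y]

def HasMotionPlannerOn (A : Set (X × X)) : Prop :=
  ∃ s : C(A, C(I, X)), ∀ a : A, ((s a) 0, (s a) 1) = (a : X × X)

theorem hasMotionPlannerOn_iff_exists_continuous_pathFamily {A : Set (X × X)} :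
    HasMotionPlannerOn A ↔ ∃ γ : ∀ a : A, Path a.1.1 a.1.2, Continuous ↿γ := by
  constructor
  · rintro ⟨s, hs⟩
    exact ⟨fun a => ⟨s a, congrArg Prod.fst (hs a), congrArg Prod.snd (hs a)⟩,
      continuous_eval.comp (s.continuous.prodMap continuous_id)⟩
  · rintro ⟨γ, hγ⟩
    exact ⟨ContinuousMap.curry ⟨↿γ, hγ⟩, fun a => Prod.ext (γ a).source (γ a).target⟩

theorem HasMotionPlannerOn.preimage_prodMap {f : C(X, Y)} {g : C(Y, X)}
    (H : (g.comp f).Homotopy (ContinuousMap.id X)) {A : Set (Y × Y)}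
    (hA : HasMotionPlannerOn A) : HasMotionPlannerOn (Prod.map f f ⁻¹' A) := by
  obtain ⟨γ, hγ⟩ := hasMotionPlannerOn_iff_exists_continuous_pathFamily.mp hA
  let V := Prod.map f f ⁻¹' A
  have hH : ∀ {h : V → X}, Continuous h → Continuous ↿fun a => H.evalAt (h a) :=
    fun hh => H.continuous.comp (continuous_snd.prodMk (hh.comp continuous_fst))
  have hfV : Continuous fun a : V => (⟨Prod.map f f a, a.2⟩ : A) :=
    ((f.continuous.prodMap f.continuous).comp continuous_subtype_val).subtype_mk _
  have hγV : Continuous ↿fun a : V => (γ ⟨_, a.2⟩).map g.continuous :=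
    g.continuous.comp (hγ.comp (hfV.prodMap continuous_id))
  refine hasMotionPlannerOn_iff_exists_continuous_pathFamily.mpr
    ⟨fun a => ((H.evalAt a.1.1).symm.trans ((γ ⟨_, a.2⟩).map g.continuous)).trans
      (H.evalAt a.1.2), ?_⟩
  exact Path.trans_continuous_family _ (Path.trans_continuous_family _
    (Path.symm_continuous_family _ (hH (by fun_prop))) _ hγV) _ (hH (by fun_prop))

end

/-- If `f : X → Y` is a homotopy equivalence and `U₀, …, U_k` are
open subsets covering `Y × Y` on each of which the evaluation map
`e_Y : C(I, Y) → Y × Y` admits a continuous section, then the open sets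
`(f × f)⁻¹(Uᵢ)` cover `X × X` and the evaluation map `e_X : C(I, X) → X × X`
admits a continuous section on each of them. In particular `TC(X) ≤ TC(Y)`. -/
theorem pullback_motion_planner_along_homotopy_equiv
    {X Y : Type*} [TopologicalSpace X] [TopologicalSpace Y]
    (f : ContinuousMap.HomotopyEquiv X Y) {k : ℕ}
    (U : Fin (k + 1) → Set (Y × Y))
    (hopen : ∀ i, IsOpen (U i))
    (hcover : (⋃ i, U i) = Set.univ)
    (hsec : ∀ i, ∃ s : C(U i, C(I, Y)),
      ∀ a : U i, ((s a) 0, (s a) 1) = (a : Y × Y)) :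
    (∀ i, IsOpen ((fun p : X × X => (f.toFun p.1, f.toFun p.2)) ⁻¹' U i)) ∧
    (⋃ i, (fun p : X × X => (f.toFun p.1, f.toFun p.2)) ⁻¹' U i) = Set.univ ∧
    ∀ i, ∃ s : C(((fun p : X × X => (f.toFun p.1, f.toFun p.2)) ⁻¹' U i), C(I, X)),
      ∀ a, ((s a) 0, (s a) 1) = (a : X × X) := by
  obtain ⟨H⟩ := f.left_inv
  have hf : Continuous (Prod.map f.toFun f.toFun) := by fun_prop
  exact ⟨fun i => (hopen i).preimage hf,
    by rw [← Set.preimage_iUnion, hcover, Set.preimage_univ],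
    fun i => HasMotionPlannerOn.preimage_prodMap H (hsec i)⟩
end

section
/- Let X and Y be metrizable topological spaces with TC(X) = m and TC(Y) = n finite. Then the topological complexity of the product satisfies TC(X × Y) ≤ m + n; that is, X × Y × X × Y admits an open cover by m + n + 1 sets on each of which the evaluation map e : P(X × Y) → (X × Y) × (X × Y) admits a continuous section. -/
open unitInterval

/-- A "motion planner" of size `n` for `X`: an open cover of `X × X` by `n` sets
on each of which the evaluation map `e : C(I, X) → X × X`, `e γ = (γ 0, γ 1)`,
admits a continuous section. -/
def HasMotionPlanner (X : Type*) [TopologicalSpace X] (n : ℕ) : Prop :=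
  ∃ U : Fin n → Set (X × X),
    (∀ i, IsOpen (U i)) ∧ (⋃ i, U i) = Set.univ ∧
    ∀ i, ∃ s : C(U i, C(I, X)), ∀ a : U i, ((s a) 0, (s a) 1) = (a : X × X)

/-- The (reduced) topological complexity of `X`: one less than the smallest
cardinality of an open cover of `X × X` on each member of which the evaluation
map admits a continuous section (`⊤` if no finite such cover exists). -/
noncomputable def TopComplexity (X : Type*) [TopologicalSpace X] : ℕ∞ :=
  ⨅ (k : ℕ) (_ : HasMotionPlanner X (k + 1)), (k : ℕ∞)

/-!
Farber's argument. Choose partitions of unity `(f i)` on `X × X` and `(g j)` on `Y × Y` subordinate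
to motion planners `U 0, …, U m` and `V 0, …, V n`, and put `F (i, j) = f i * g j` on
`(X × Y) × (X × Y)`. For nonempty `S`, `T` let `W (S, T)` be the open set where every `F p` with
`p ∈ S ×ˢ T` is positive and exceeds every `F q` with `q ∉ S ×ˢ T`. Over `W (S, T)` a section is
obtained by pairing the sections of `U i` and `V j` for any `(i, j) ∈ S ×ˢ T`. Two such sets can
only meet if one block contains the other, so the sets with `#S + #T = k + 2` are pairwise disjoint
and their union, `0 ≤ k ≤ m + n`, carries a section. Every point lies in `W (argmax f, argmax g)`,
so these `m + n + 1` unions cover.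
-/

open Function Topology

section

variable {X Y : Type*} [TopologicalSpace X] [TopologicalSpace Y]

def HasPathSectionOn (A : Set (X × X)) : Prop :=
  ∃ s : C(A, C(I, X)), ∀ a : A, ((s a) 0, (s a) 1) = (a : X × X)

namespace HasPathSectionOn

theorem mono {A B : Set (X × X)} (hB : HasPathSectionOn B) (hAB : A ⊆ B) :
    HasPathSectionOn A := by
  obtain ⟨s, hs⟩ := hB
  exact ⟨s.comp ⟨Set.inclusion hAB, continuous_inclusion hAB⟩, fun a => hs _⟩

theorem prod {A : Set (X × X)} {B : Set (Y × Y)} (hA : HasPathSectionOn A)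
    (hB : HasPathSectionOn B) :
    HasPathSectionOn {z : (X × Y) × (X × Y) | (z.1.1, z.2.1) ∈ A ∧ (z.1.2, z.2.2) ∈ B} := by
  obtain ⟨s, hs⟩ := hA
  obtain ⟨t, ht⟩ := hB
  let u : C({z : (X × Y) × (X × Y) | (z.1.1, z.2.1) ∈ A ∧ (z.1.2, z.2.2) ∈ B}, C(I, X × Y)) :=
    { toFun := fun z => (s ⟨_, z.2.1⟩).prodMk (t ⟨_, z.2.2⟩)
      continuous_toFun := by
        refine ContinuousMap.continuous_of_continuous_uncurry _ ?_
        show Continuous fun p : _ × I => (s ⟨_, p.1.2.1⟩ p.2, t ⟨_, p.1.2.2⟩ p.2)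
        fun_prop }
  refine ⟨u, fun z => ?_⟩
  have hsz := hs ⟨_, z.2.1⟩
  have htz := ht ⟨_, z.2.2⟩
  simp only [Prod.ext_iff] at hsz htz
  simp [u, hsz, htz]

theorem iUnion {ι : Type*} {U : ι → Set (X × X)} (hU : ∀ i, IsOpen (U i))
    (hd : Pairwise (Disjoint on U)) (h : ∀ i, HasPathSectionOn (U i)) :
    HasPathSectionOn (⋃ i, U i) := by
  choose s hs using h
  let S : ι → Set (⋃ i, U i) := fun i => Subtype.val ⁻¹' U i
  let φ : ∀ i, C(S i, C(I, X)) := fun i =>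
    (s i).comp ⟨fun x => ⟨x.1.1, x.2⟩, by fun_prop⟩
  have hφ : ∀ i j (x) (hxi : x ∈ S i) (hxj : x ∈ S j), φ i ⟨x, hxi⟩ = φ j ⟨x, hxj⟩ := by
    intro i j x hxi hxj
    obtain rfl : i = j := hd.eq (Set.not_disjoint_iff.2 ⟨x, hxi, hxj⟩)
    rfl
  have hS : ∀ x, ∃ i, S i ∈ 𝓝 x := fun x =>
    (Set.mem_iUnion.1 x.2).imp fun i hi => ((hU i).preimage continuous_subtype_val).mem_nhds hi
  refine ⟨ContinuousMap.liftCover S φ hφ hS, fun x => ?_⟩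
  obtain ⟨i, hi⟩ := Set.mem_iUnion.1 x.2
  rw [ContinuousMap.liftCover_coe (i := i) ⟨x, hi⟩]
  exact hs i ⟨x, hi⟩

end HasPathSectionOn

theorem topComplexity_le {k : ℕ} (h : HasMotionPlanner X (k + 1)) : TopComplexity X ≤ k :=
  iInf₂_le k h

theorem hasMotionPlanner_of_topComplexity_eq {m : ℕ} (h : TopComplexity X = m) :
    HasMotionPlanner X (m + 1) := by
  rw [TopComplexity, iInf_subtype'] at h
  have : Nonempty {k // HasMotionPlanner X (k + 1)} := by
    by_contra hempty
    rw [not_nonempty_iff] at hempty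
    simp [iInf_of_empty] at h
  obtain ⟨⟨k, hk⟩, hkm⟩ := ciInf_mem fun k : {k // HasMotionPlanner X (k + 1)} => (k : ℕ∞)
  rw [h, Nat.cast_inj] at hkm
  exact hkm ▸ hk

section Dominance

open Finset

variable {ι κ Z : Type*}

def dominanceSet (F : ι → Z → ℝ) (P : Finset ι) : Set Z :=
  {z | ∀ p ∈ P, 0 < F p z ∧ ∀ q ∉ P, F q z < F p z}

theorem isOpen_dominanceSet [TopologicalSpace Z] [Finite ι] {F : ι → Z → ℝ}
    (hF : ∀ i, Continuous (F i)) (P : Finset ι) : IsOpen (dominanceSet F P) := by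
  simp only [dominanceSet, Set.ofPred_forall, Set.ofPred_and]
  exact isOpen_biInter_finset fun p _ => (isOpen_lt continuous_const (hF p)).inter <|
    isOpen_iInter_of_finite fun q => isOpen_iInter_of_finite fun _ => isOpen_lt (hF q) (hF p)

theorem subset_or_subset_of_mem_dominanceSet {F : ι → Z → ℝ} {P Q : Finset ι} {z : Z}
    (hP : z ∈ dominanceSet F P) (hQ : z ∈ dominanceSet F Q) : P ⊆ Q ∨ Q ⊆ P := by
  by_contra! h
  obtain ⟨⟨p, hpP, hpQ⟩, ⟨q, hqQ, hqP⟩⟩ := h.imp not_subset.1 not_subset.1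
  exact ((hP p hpP).2 q hqP).asymm ((hQ q hqQ).2 p hpQ)

theorem Finset.eq_and_eq_of_subset_of_card_add_le {S S' : Finset ι} {T T' : Finset κ}
    (hS : S ⊆ S') (hT : T ⊆ T') (hcard : #S' + #T' ≤ #S + #T) : S = S' ∧ T = T' := by
  have := card_le_card hS
  have := card_le_card hT
  exact ⟨eq_of_subset_of_card_le hS (by omega), eq_of_subset_of_card_le hT (by omega)⟩

theorem eq_of_mem_dominanceSet_product {F : ι × κ → Z → ℝ} {S S' : Finset ι}
    {T T' : Finset κ} {z : Z} (hS : S.Nonempty) (hT : T.Nonempty) (hS' : S'.Nonempty)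
    (hT' : T'.Nonempty) (hcard : #S + #T = #S' + #T') (h : z ∈ dominanceSet F (S ×ˢ T))
    (h' : z ∈ dominanceSet F (S' ×ˢ T')) : S = S' ∧ T = T' := by
  rcases subset_or_subset_of_mem_dominanceSet h h' with hsub | hsub
  · rw [← coe_subset, coe_product, coe_product, Set.prod_subset_prod_iff' (by simp [hS, hT])]
      at hsub
    exact eq_and_eq_of_subset_of_card_add_le hsub.1 hsub.2 hcard.ge
  · rw [← coe_subset, coe_product, coe_product, Set.prod_subset_prod_iff' (by simp [hS', hT'])]
      at hsub
    exact (eq_and_eq_of_subset_of_card_add_le hsub.1 hsub.2 hcard.le).imp Eq.symm Eq.symm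

theorem mul_lt_mul_of_le_of_le_of_ne {α : Type*} [Semiring α] [PartialOrder α]
    [IsStrictOrderedRing α] {a b c d : α} (ha : 0 ≤ a) (hac : a ≤ c) (hbd : b ≤ d) (hc : 0 < c)
    (hd : 0 < d) (hne : (a, b) ≠ (c, d)) : a * b < c * d := by
  rcases hac.lt_or_eq with hac | rfl
  · exact mul_lt_mul_of_lt_of_le_of_nonneg_of_pos hac hbd ha hd
  · exact mul_lt_mul_of_pos_left (hbd.lt_of_ne fun h => hne (h ▸ rfl)) hc

/-- Take `S = argmax f` and `T = argmax g`. -/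
theorem exists_mem_dominanceSet_mul [Fintype ι] [Fintype κ] {f : ι → Z → ℝ} {g : κ → Z → ℝ}
    {z : Z} (hf : ∀ i, 0 ≤ f i z) (hf' : ∃ i, 0 < f i z)
    (hg' : ∃ j, 0 < g j z) : ∃ (S : Finset ι) (T : Finset κ), S.Nonempty ∧ T.Nonempty ∧
      z ∈ dominanceSet (fun p z => f p.1 z * g p.2 z) (S ×ˢ T) := by
  classical
  obtain ⟨i₀, -, hi₀⟩ := exists_max_image univ (f · z) (univ_nonempty_iff.2 ⟨hf'.choose⟩)
  obtain ⟨j₀, -, hj₀⟩ := exists_max_image univ (g · z) (univ_nonempty_iff.2 ⟨hg'.choose⟩)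
  have hi₀_pos : 0 < f i₀ z := hf'.elim fun i hi => hi.trans_le (hi₀ i (mem_univ i))
  have hj₀_pos : 0 < g j₀ z := hg'.elim fun j hj => hj.trans_le (hj₀ j (mem_univ j))
  refine ⟨({i | f i z = f i₀ z} : Finset ι), ({j | g j z = g j₀ z} : Finset κ),
    ⟨i₀, by simp⟩, ⟨j₀, by simp⟩, ?_⟩
  rintro ⟨i, j⟩ hij
  simp only [mem_product, mem_filter_univ] at hij
  simp only [hij.1, hij.2]
  refine ⟨mul_pos hi₀_pos hj₀_pos, fun ⟨i', j'⟩ hq => ?_⟩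
  simp only [mem_product, mem_filter_univ] at hq
  exact mul_lt_mul_of_le_of_le_of_ne (hf i') (hi₀ i' (mem_univ _)) (hj₀ j' (mem_univ _))
    hi₀_pos hj₀_pos fun h => hq (Prod.ext_iff.1 h)

end Dominance

open Finset in
theorem HasMotionPlanner.prod [NormalSpace (X × X)] [ParacompactSpace (X × X)]
    [NormalSpace (Y × Y)] [ParacompactSpace (Y × Y)] {a b : ℕ} (hX : HasMotionPlanner X (a + 1))
    (hY : HasMotionPlanner Y (b + 1)) : HasMotionPlanner (X × Y) (a + b + 1) := by
  obtain ⟨U, hUo, hUc, hUs⟩ := hX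
  obtain ⟨V, hVo, hVc, hVs⟩ := hY
  obtain ⟨f, hf⟩ := PartitionOfUnity.exists_isSubordinate isClosed_univ U hUo hUc.ge
  obtain ⟨g, hg⟩ := PartitionOfUnity.exists_isSubordinate isClosed_univ V hVo hVc.ge
  let fX : Fin (a + 1) → (X × Y) × (X × Y) → ℝ := fun i z => f i (z.1.1, z.2.1)
  let gY : Fin (b + 1) → (X × Y) × (X × Y) → ℝ := fun j z => g j (z.1.2, z.2.2)
  let F : Fin (a + 1) × Fin (b + 1) → (X × Y) × (X × Y) → ℝ := fun p z => fX p.1 z * gY p.2 z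
  have hF : ∀ p, Continuous (F p) := fun p => by fun_prop
  let blocks (k : Fin (a + b + 1)) :=
    {ST : Finset (Fin (a + 1)) × Finset (Fin (b + 1)) //
      ST.1.Nonempty ∧ ST.2.Nonempty ∧ #ST.1 + #ST.2 = k + 2}
  refine ⟨fun k => ⋃ ST : blocks k, dominanceSet F (ST.1.1 ×ˢ ST.1.2),
    fun k => isOpen_iUnion fun _ => isOpen_dominanceSet hF _, ?_, fun k => ?_⟩
  · refine Set.eq_univ_of_forall fun z => ?_
    obtain ⟨S, T, hS, hT, hz⟩ := exists_mem_dominanceSet_mul (f := fX) (g := gY)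
      (fun i => f.nonneg i _) (f.exists_pos (Set.mem_univ _)) (g.exists_pos (Set.mem_univ _))
    have := hS.card_pos
    have := hT.card_pos
    have : #S ≤ a + 1 := by simpa using card_le_univ S
    have : #T ≤ b + 1 := by simpa using card_le_univ T
    exact Set.mem_iUnion.2 ⟨⟨#S + #T - 2, by omega⟩,
      Set.mem_iUnion.2 ⟨⟨(S, T), hS, hT, by simp only; omega⟩, hz⟩⟩
  · refine HasPathSectionOn.iUnion (fun _ => isOpen_dominanceSet hF _) ?_ fun ST => ?_
    · rintro ⟨⟨S, T⟩, hS, hT, hcard⟩ ⟨⟨S', T'⟩, hS', hT', hcard'⟩ hne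
      refine Set.disjoint_left.2 fun z h h' => hne ?_
      obtain ⟨rfl, rfl⟩ :=
        eq_of_mem_dominanceSet_product hS hT hS' hT' (hcard.trans hcard'.symm) h h'
      rfl
    obtain ⟨⟨S, T⟩, ⟨i, hi⟩, ⟨j, hj⟩, -⟩ := ST
    refine (HasPathSectionOn.prod (hUs i) (hVs j)).mono fun z hz => ?_
    have hpos := (hz (i, j) (mem_product.2 ⟨hi, hj⟩)).1
    exact ⟨hf i (subset_tsupport _ (left_ne_zero_of_mul hpos.ne')),
      hg j (subset_tsupport _ (right_ne_zero_of_mul hpos.ne'))⟩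

end

/-- For metrizable spaces `X`, `Y` with `TopComplexity(X) = m` and `TopComplexity(Y) = n`
finite, one has `TopComplexity(X × Y) ≤ m + n`; that is, `(X × Y) × (X × Y)` admits an open
cover by `m + n + 1` sets on each of which the evaluation map admits a continuous
section. -/
theorem TC_product_le
    {X Y : Type*} [TopologicalSpace X] [TopologicalSpace Y]
    [TopologicalSpace.MetrizableSpace X] [TopologicalSpace.MetrizableSpace Y]
    {m n : ℕ} (hX : TopComplexity X = (m : ℕ∞)) (hY : TopComplexity Y = (n : ℕ∞)) :
    TopComplexity (X × Y) ≤ ((m + n : ℕ) : ℕ∞) ∧ HasMotionPlanner (X × Y) (m + n + 1) := by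
  let := TopologicalSpace.metrizableSpaceMetric X
  let := TopologicalSpace.metrizableSpaceMetric Y
  have h :=
    (hasMotionPlanner_of_topComplexity_eq hX).prod (hasMotionPlanner_of_topComplexity_eq hY)
  exact ⟨topComplexity_le h, h⟩
end
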